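/- arXiv:1506.06404 — 5 statements merged into one kernel-verified Lean document; each statement's English description precedes it below -/
import Mathlib

section
/- In any tree T on vertex set V whose vertices are partitioned into red vertices R and blue vertices B, such that every leaf of T is red, if |B| ≥ 3|R| − 4 then there exist two distinct adjacent vertices u₁ and u₂ that are both blue and both have degree exactly 2 in T. -/
open SimpleGraph

namespace PhyloMP

/-- The set of mutation edges of a vertex coloring `ω` of a graph:
edges whose two endpoints receive different states. -/
def mutationEdges {V C : Type} (g : SimpleGraph V) (ω : V → C) : Set (Sym2 V) :=
  {e | e ∈ g.edgeSet ∧ ∃ u v : V, e = s(u, v) ∧ ω u ≠ ω v}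

/-- An unrooted binary phylogenetic tree on taxon set `X`, with vertex set `V`:
a tree whose degree-1 vertices (leaves) are bijectively labeled by `X` and whose
other vertices have degree 3. -/
structure XTree (X V : Type) [Fintype V] where
  g : SimpleGraph V
  isTree : g.IsTree
  leaf : X → V
  leafInj : Function.Injective leaf
  leafDeg : ∀ x, (g.neighborSet (leaf x)).ncard = 1
  leavesOnly : ∀ v, (g.neighborSet v).ncard = 1 → ∃ x, leaf x = v
  internalDeg : ∀ v, (g.neighborSet v).ncard ≠ 1 → (g.neighborSet v).ncard = 3

variable {X V C : Type} [Fintype V]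

/-- `ω` extends the character `χ` to all vertices of `T`. -/
def IsExtension (T : XTree X V) (χ : X → C) (ω : V → C) : Prop :=
  ∀ x, ω (T.leaf x) = χ x

/-- The parsimony score `ℓ(T,χ)`: the minimum number of mutation edges over
all extensions of `χ` to `T`. -/
noncomputable def score (T : XTree X V) (χ : X → C) : ℕ :=
  sInf {n | ∃ ω : V → C, IsExtension T χ ω ∧ (mutationEdges T.g ω).ncard = n}

/-- A most parsimonious extension. -/
def IsMPExtension (T : XTree X V) (χ : X → C) (ω : V → C) : Prop :=
  IsExtension T χ ω ∧ (mutationEdges T.g ω).ncard = score T χ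

/-- `|χ|`: the number of states used by the character `χ`. -/
noncomputable def nStates {X C : Type} (χ : X → C) : ℕ := (Set.range χ).ncard

/-- `χ` is convex on `T`: its parsimony score equals its number of states minus one. -/
def IsConvex (T : XTree X V) (χ : X → C) : Prop := score T χ = nStates χ - 1

/-- The maximum parsimony distance between two `X`-trees. -/
noncomputable def dMP {V₁ V₂ : Type} [Fintype V₁] [Fintype V₂]
    (T₁ : XTree X V₁) (T₂ : XTree X V₂) : ℕ :=
  sSup {d | ∃ χ : X → ℕ, Nat.dist (score T₁ χ) (score T₂ χ) = d}

/-- A character achieving the maximum parsimony distance. -/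
def IsOptimal {V₁ V₂ : Type} [Fintype V₁] [Fintype V₂]
    (T₁ : XTree X V₁) (T₂ : XTree X V₂) (χ : X → C) : Prop :=
  Nat.dist (score T₁ χ) (score T₂ χ) = dMP T₁ T₂

/-- The forest induced by an extension `ω`: delete all mutation edges of `ω` from `T`. -/
noncomputable def forest (T : XTree X V) (ω : V → C) : SimpleGraph V :=
  T.g.deleteEdges (mutationEdges T.g ω)

/-- A connected component `c` of the forest `F` carries the state `s`. -/
def carries {V C : Type} (F : SimpleGraph V) (ω : V → C) (c : F.ConnectedComponent) (s : C) : Prop :=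
  ∃ v, F.connectedComponentMk v = c ∧ ω v = s

/-- The number of components of `F` carrying the state `s`. A state is *unique*
if this is 1 and *repeating* if this is at least 2. -/
noncomputable def stateMultiplicity {V C : Type} (F : SimpleGraph V) (ω : V → C) (s : C) : ℕ :=
  {c : F.ConnectedComponent | carries F ω c s}.ncard

/-- Relabel the state `A` as `B` in the character `χ`. -/
def relabel {X C : Type} [DecidableEq C] (χ : X → C) (A B : C) : X → C :=
  fun x => if χ x = A then B else χ x

/-- Two states `A`, `B` are adjacent (with respect to the coloring `ω`) if some edge of the
graph joins a vertex colored `A` to a vertex colored `B`; for distinct states, this edge is a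
mutation edge joining the corresponding components of the induced forest. -/
def statesAdjacent {V C : Type} (g : SimpleGraph V) (ω : V → C) (A B : C) : Prop :=
  ∃ u v, g.Adj u v ∧ ω u = A ∧ ω v = B

end PhyloMP

open PhyloMP in
/-- In a tree (with at least one edge) whose vertices are partitioned into
red vertices `R` and blue vertices `Rᶜ`, with all leaves red, if `|B| ≥ 3|R| - 4` then
two distinct adjacent blue vertices of degree 2 exist. -/
theorem stmt_0 {V : Type} [Fintype V] (g : SimpleGraph V) (hT : g.IsTree)
    (hE : g.edgeSet.Nonempty) (R : Set V)
    (hleaf : ∀ v, (g.neighborSet v).ncard = 1 → v ∈ R)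
    (hB : (3 : ℤ) * R.ncard - 4 ≤ ((Rᶜ : Set V)).ncard) :
    ∃ u₁ u₂ : V, u₁ ≠ u₂ ∧ g.Adj u₁ u₂ ∧ u₁ ∈ Rᶜ ∧ u₂ ∈ Rᶜ ∧
      (g.neighborSet u₁).ncard = 2 ∧ (g.neighborSet u₂).ncard = 2 := by
  classical
  by_contra hcon
  push_neg at hcon
  -- translate ncard to degree
  have hdeg : ∀ v : V, (g.neighborSet v).ncard = g.degree v := fun v => by
    rw [← SimpleGraph.card_neighborSet_eq_degree, Set.ncard_eq_toFinset_card', Set.toFinset_card]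
  simp only [hdeg] at hleaf hcon
  -- basic facts
  have hn2 : 2 ≤ Fintype.card V := by
    obtain ⟨e, he⟩ := hE
    induction e with
    | h a b =>
      have : Nontrivial V := ⟨a, b, g.ne_of_adj he⟩
      exact Fintype.one_lt_card
  have hdegpos : ∀ v : V, 0 < g.degree v := by
    intro v
    have : Nontrivial V := Fintype.one_lt_card_iff_nontrivial.mp hn2
    obtain ⟨w, hw⟩ := exists_ne v
    obtain ⟨p⟩ := hT.isConnected.preconnected v w
    rw [g.degree_pos_iff_exists_adj]
    exact ⟨p.getVert 1, Walk.adj_snd (Walk.not_nil_of_ne hw.symm)⟩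
  -- blue vertices have degree ≥ 2
  have hblue2 : ∀ v : V, v ∉ R → 2 ≤ g.degree v := by
    intro v hv
    have h1 := hdegpos v
    have h2 : g.degree v ≠ 1 := fun h => hv (hleaf v h)
    omega
  -- the three classes
  set Rf : Finset V := Finset.univ.filter (· ∈ R) with hRf
  set B2 : Finset V := Finset.univ.filter (fun v => v ∉ R ∧ g.degree v = 2) with hB2
  set B3 : Finset V := Finset.univ.filter (fun v => v ∉ R ∧ g.degree v ≠ 2) with hB3
  have hcard : Rf.card + B2.card + B3.card = Fintype.card V := by
    rw [hRf, hB2, hB3]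
    rw [← Finset.card_union_of_disjoint, ← Finset.card_union_of_disjoint]
    · congr 1
      ext v
      simp only [Finset.mem_union, Finset.mem_filter, Finset.mem_univ, true_and]
      by_cases hv : v ∈ R <;> by_cases hd : g.degree v = 2 <;> simp [hv, hd]
    · simp only [Finset.disjoint_left, Finset.mem_union, Finset.mem_filter, Finset.mem_univ,
        true_and]
      rintro v (hv | ⟨hv, hd⟩) ⟨hv', hd'⟩ <;> tauto
    · simp only [Finset.disjoint_left, Finset.mem_filter, Finset.mem_univ, true_and]
      rintro v hv ⟨hv', _⟩; exact hv' hv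
  -- handshake and tree edge count
  have hsum : ∑ v : V, g.degree v = 2 * (Fintype.card V - 1) := by
    rw [SimpleGraph.sum_degrees_eq_twice_card_edges]
    congr 1
    have := hT.card_edgeFinset
    omega
  have hsplit : ∑ v : V, g.degree v
      = ∑ v ∈ Rf, g.degree v + ∑ v ∈ B2, g.degree v + ∑ v ∈ B3, g.degree v := by
    rw [← Finset.sum_union, ← Finset.sum_union]
    · congr 1
      ext v
      simp only [Finset.mem_union, hRf, hB2, hB3, Finset.mem_filter, Finset.mem_univ, true_and]
      constructor
      · intro _; by_cases hv : v ∈ R <;> by_cases hd : g.degree v = 2 <;> tauto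
      · intro _; trivial
    · simp only [Finset.disjoint_left, Finset.mem_union, hRf, hB2, hB3, Finset.mem_filter,
        Finset.mem_univ, true_and]
      rintro v (hv | ⟨hv, hd⟩) ⟨hv', hd'⟩ <;> tauto
    · simp only [Finset.disjoint_left, hRf, hB2, Finset.mem_filter, Finset.mem_univ, true_and]
      rintro v hv ⟨hv', _⟩; exact hv' hv
  have hRsum : Rf.card ≤ ∑ v ∈ Rf, g.degree v :=
    Finset.card_nsmul_le_sum Rf _ 1 (fun v _ => hdegpos v) |>.trans_eq' (by simp)
  have hB2sum : ∑ v ∈ B2, g.degree v = 2 * B2.card := by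
    rw [Finset.sum_congr rfl (fun v hv => ?_), Finset.sum_const, smul_eq_mul, mul_comm]
    exact (Finset.mem_filter.mp hv).2.2
  have hB3sum : 3 * B3.card ≤ ∑ v ∈ B3, g.degree v := by
    calc 3 * B3.card = ∑ _v ∈ B3, 3 := by rw [Finset.sum_const, smul_eq_mul, mul_comm]
      _ ≤ ∑ v ∈ B3, g.degree v := Finset.sum_le_sum (fun v hv => by
          obtain ⟨hv1, hv2⟩ := (Finset.mem_filter.mp hv).2
          have := hblue2 v hv1
          omega)
  -- double counting: 2 * B2.card ≤ sum of degrees over Rf ∪ B3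
  have hnbr : ∀ v ∈ B2, g.neighborFinset v ⊆ Rf ∪ B3 := by
    intro v hv u hu
    rw [SimpleGraph.mem_neighborFinset] at hu
    obtain ⟨hv1, hv2⟩ := (Finset.mem_filter.mp hv).2
    simp only [Finset.mem_union, hRf, hB3, Finset.mem_filter, Finset.mem_univ, true_and]
    by_cases hu1 : u ∈ R
    · left; exact hu1
    · right
      refine ⟨hu1, ?_⟩
      intro hu2
      exact hcon v u (g.ne_of_adj hu) hu hv1 hu1 hv2 hu2
  have hdouble : ∑ v ∈ B2, g.degree v ≤ ∑ u ∈ Rf ∪ B3, g.degree u := by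
    have step1 : ∀ v ∈ B2, g.degree v = ∑ u ∈ Rf ∪ B3, if g.Adj v u then 1 else 0 := by
      intro v hv
      rw [← Finset.card_filter]
      rw [SimpleGraph.degree]
      congr 1
      ext u
      simp only [Finset.mem_filter, SimpleGraph.mem_neighborFinset]
      constructor
      · intro h; exact ⟨hnbr v hv (by rwa [SimpleGraph.mem_neighborFinset]), h⟩
      · exact fun h => h.2
    calc ∑ v ∈ B2, g.degree v
        = ∑ v ∈ B2, ∑ u ∈ Rf ∪ B3, if g.Adj v u then 1 else 0 :=
          Finset.sum_congr rfl step1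
      _ = ∑ u ∈ Rf ∪ B3, ∑ v ∈ B2, if g.Adj v u then 1 else 0 := Finset.sum_comm
      _ ≤ ∑ u ∈ Rf ∪ B3, g.degree u := by
          refine Finset.sum_le_sum (fun u _ => ?_)
          rw [SimpleGraph.degree, ← Finset.card_filter]
          refine Finset.card_le_card ?_
          intro v hv
          rw [Finset.mem_filter] at hv
          rw [SimpleGraph.mem_neighborFinset]
          exact hv.2.symm
    -- done
  have hsumU : ∑ u ∈ Rf ∪ B3, g.degree u + ∑ v ∈ B2, g.degree v = ∑ v : V, g.degree v := by
    rw [← Finset.sum_union]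
    · congr 1
      ext v
      simp only [Finset.mem_union, hRf, hB2, hB3, Finset.mem_filter, Finset.mem_univ, true_and]
      constructor
      · intro _; trivial
      · intro _; by_cases hv : v ∈ R <;> by_cases hd : g.degree v = 2 <;> tauto
    · simp only [Finset.disjoint_left, Finset.mem_union, hRf, hB2, hB3, Finset.mem_filter,
        Finset.mem_univ, true_and]
      rintro v (hv | ⟨hv, hd⟩) ⟨hv', hd'⟩ <;> tauto
  -- translate hB
  have hRcard : R.ncard = Rf.card := by
    rw [Set.ncard_eq_toFinset_card']
    congr 1
    ext v; simp [hRf]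
  have hBcard : (Rᶜ : Set V).ncard = B2.card + B3.card := by
    rw [Set.ncard_eq_toFinset_card', ← Finset.card_union_of_disjoint]
    · congr 1
      ext v
      simp only [Set.mem_toFinset, Set.mem_compl_iff, Finset.mem_union, hB2, hB3,
        Finset.mem_filter, Finset.mem_univ, true_and]
      by_cases hd : g.degree v = 2 <;> tauto
    · simp only [Finset.disjoint_left, hB2, hB3, Finset.mem_filter, Finset.mem_univ, true_and]
      rintro v ⟨hv, hd⟩ ⟨_, hd'⟩; exact hd' hd
  rw [hRcard, hBcard] at hB
  push_cast at hB
  omega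
end

section
/- Let F be the forest induced by a most parsimonious extension of a character χ to an X-tree T, with homoplasy score h = ℓ(T,χ) − |χ| + 1. Then the number of unique components of F lies between |χ| − h and |χ|, and the number of repeating components of F lies between h and 2h. -/
open SimpleGraph

/-!
Deleting an edge of a forest adds exactly one component, so deleting the `ℓ(T,χ)` mutation edges
of the tree `T` leaves a forest `F` with `ℓ(T,χ) + 1 = |χ| + h` components. Each component is
monochromatic, and by parsimony every state of the extension already occurs on a leaf, so the
components carry exactly the `|χ|` states of `χ`. If `u` components are unique, the remaining
`|χ| - u` states are carried by the `r` repeating components, at least two each: `u + r = |χ| + h`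
and `2 (|χ| - u) ≤ r`, from which all four bounds follow.
-/

namespace SimpleGraph

variable {V : Type*} {G : SimpleGraph V} {u v : V}

theorem Reachable.deleteEdges_or {x y : V} (h : G.Reachable x y) :
    (G.deleteEdges {s(u, v)}).Reachable x y ∨ (G.deleteEdges {s(u, v)}).Reachable x u ∨
      (G.deleteEdges {s(u, v)}).Reachable x v := by
  obtain ⟨p⟩ := h
  induction p with
  | nil => exact .inl .rfl
  | @cons x z y hxz _ ih =>
    by_cases he : s(x, z) = s(u, v)
    · rcases Sym2.eq_iff.mp he with ⟨rfl, -⟩ | ⟨rfl, -⟩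
      · exact .inr (.inl .rfl)
      · exact .inr (.inr .rfl)
    · have hxz' : (G.deleteEdges {s(u, v)}).Reachable x z :=
        (deleteEdges_adj.mpr ⟨hxz, he⟩).reachable
      exact ih.imp hxz'.trans (Or.imp hxz'.trans hxz'.trans)

theorem IsBridge.card_connectedComponent_deleteEdges [Finite V] (huv : G.Adj u v)
    (h : G.IsBridge s(u, v)) :
    Nat.card (G.deleteEdges {s(u, v)}).ConnectedComponent =
      Nat.card G.ConnectedComponent + 1 := by
  set G' := G.deleteEdges {s(u, v)}
  let φ : G'.ConnectedComponent → G.ConnectedComponent :=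
    ConnectedComponent.map (Hom.ofLE (deleteEdges_le _))
  have hne : G'.connectedComponentMk u ≠ G'.connectedComponentMk v :=
    fun h' => h (ConnectedComponent.exact h')
  -- only the components of `u` and `v` merge in `G`
  have hφ : Set.BijOn φ {G'.connectedComponentMk v}ᶜ Set.univ := by
    refine ⟨Set.mapsTo_univ _ _, ?_, ?_⟩
    · intro c₁ hc₁ c₂ hc₂ heq
      obtain ⟨w₁, rfl⟩ := c₁.exists_rep
      obtain ⟨w₂, rfl⟩ := c₂.exists_rep
      have hw : G.Reachable w₁ w₂ := ConnectedComponent.exact heq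
      rcases hw.deleteEdges_or (u := u) (v := v) with h₁ | h₁ | h₁
      · exact ConnectedComponent.sound h₁
      · rcases hw.symm.deleteEdges_or (u := u) (v := v) with h₂ | h₂ | h₂
        · exact ConnectedComponent.sound h₂.symm
        · exact ConnectedComponent.sound (h₁.trans h₂.symm)
        · exact (hc₂ (ConnectedComponent.sound h₂)).elim
      · exact (hc₁ (ConnectedComponent.sound h₁)).elim
    · intro c _
      obtain ⟨w, rfl⟩ := c.exists_rep
      by_cases hw : G'.connectedComponentMk w = G'.connectedComponentMk v
      · refine ⟨G'.connectedComponentMk u, hne, ?_⟩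
        exact ConnectedComponent.sound (huv.reachable.trans
          ((ConnectedComponent.exact hw).mono (deleteEdges_le _)).symm)
      · exact ⟨_, hw, rfl⟩
  rw [← Set.ncard_univ, ← Set.ncard_univ, ← hφ.ncard_eq, Set.compl_eq_univ_sdiff,
    Set.ncard_sdiff_singleton_add_one (Set.mem_univ _)]

theorem IsAcyclic.card_connectedComponent_deleteEdges [Finite V] (hG : G.IsAcyclic)
    {M : Set (Sym2 V)} (hM : M ⊆ G.edgeSet) :
    Nat.card (G.deleteEdges M).ConnectedComponent = Nat.card G.ConnectedComponent + M.ncard := by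
  induction M, M.toFinite using Set.Finite.induction_on with
  | empty => simp
  | @insert e M he _ ih =>
    induction e with | h u v =>
    have huv : (G.deleteEdges M).Adj u v := deleteEdges_adj.mpr ⟨hM (.inl rfl), fun h => he h⟩
    have hbridge : (G.deleteEdges M).IsBridge s(u, v) :=
      isAcyclic_iff_forall_adj_isBridge.mp (hG.anti (deleteEdges_le _)) huv
    rw [Set.ncard_insert_of_notMem he, Set.insert_eq, Set.union_comm,
      ← deleteEdges_deleteEdges, hbridge.card_connectedComponent_deleteEdges huv,
      ih ((Set.subset_insert _ _).trans hM), add_assoc]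

theorem IsTree.card_connectedComponent_deleteEdges [Finite V] (hG : G.IsTree)
    {M : Set (Sym2 V)} (hM : M ⊆ G.edgeSet) :
    Nat.card (G.deleteEdges M).ConnectedComponent = M.ncard + 1 := by
  have : Nonempty V := hG.connected.nonempty
  have : Subsingleton G.ConnectedComponent :=
    hG.connected.preconnected.subsingleton_connectedComponent
  rw [hG.isAcyclic.card_connectedComponent_deleteEdges hM, Nat.card_unique, add_comm]

end SimpleGraph

section FiberCount

variable {ι C : Type*} [Finite ι] (σ : ι → C)

theorem one_le_ncard_fiber (i : ι) : 1 ≤ {j | σ j = σ i}.ncard :=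
  (Set.ncard_pos).mpr ⟨i, rfl⟩

theorem ncard_unique_add_ncard_repeating :
    {i | {j | σ j = σ i}.ncard = 1}.ncard + {i | 2 ≤ {j | σ j = σ i}.ncard}.ncard =
      Nat.card ι := by
  have hcompl : {i | 2 ≤ {j | σ j = σ i}.ncard} = {i | {j | σ j = σ i}.ncard = 1}ᶜ := by
    ext i
    have := one_le_ncard_fiber σ i
    simp only [Set.mem_ofPred_eq, Set.mem_compl_iff]
    omega
  rw [hcompl, Set.ncard_add_ncard_compl]

theorem ncard_range_eq_ncard_unique_add_ncard_image_repeating :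
    (Set.range σ).ncard = {i | {j | σ j = σ i}.ncard = 1}.ncard +
      (σ '' {i | 2 ≤ {j | σ j = σ i}.ncard}).ncard := by
  set U := {i | {j | σ j = σ i}.ncard = 1}
  set R := {i | 2 ≤ {j | σ j = σ i}.ncard}
  have hinj : U.InjOn σ := by
    intro i hi j _ hij
    obtain ⟨k, hk⟩ := Set.ncard_eq_one.mp hi
    have hi' : i ∈ {k | σ k = σ i} := rfl
    have hj' : j ∈ {k | σ k = σ i} := hij.symm
    rw [hk] at hi' hj'
    exact hi'.trans hj'.symm
  have hdisj : Disjoint (σ '' U) (σ '' R) := by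
    rw [Set.disjoint_left]
    rintro _ ⟨i, hi, rfl⟩ ⟨j, hj, hji⟩
    have h₁ : {k | σ k = σ i}.ncard = 1 := hi
    have h₂ : 2 ≤ {k | σ k = σ i}.ncard := hji ▸ hj
    omega
  have hrange : Set.range σ = σ '' U ∪ σ '' R := by
    rw [← Set.image_union, ← Set.image_univ]
    congr 1
    ext i
    have := one_le_ncard_fiber σ i
    simp only [Set.mem_univ, Set.mem_union, Set.mem_ofPred_eq, true_iff, U, R]
    omega
  rw [hrange, Set.ncard_union_eq hdisj, hinj.ncard_image]

theorem two_mul_ncard_image_repeating_le :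
    2 * (σ '' {i | 2 ≤ {j | σ j = σ i}.ncard}).ncard ≤
      {i | 2 ≤ {j | σ j = σ i}.ncard}.ncard := by
  classical
  have := Fintype.ofFinite ι
  set R := {i | 2 ≤ {j | σ j = σ i}.ncard}
  rw [Set.ncard_eq_toFinset_card', Set.ncard_eq_toFinset_card', Set.toFinset_image]
  refine Finset.mul_card_image_le_card _ _ fun s hs => ?_
  obtain ⟨i, hi, rfl⟩ := Finset.mem_image.mp hs
  replace hi : i ∈ R := Set.mem_toFinset.mp hi
  replace hi : 2 ≤ {j | σ j = σ i}.ncard := hi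
  have hR : {j | σ j = σ i} ⊆ R := fun j (hj : σ j = σ i) => by
    simpa only [R, Set.mem_ofPred_eq, hj] using hi
  have hfiber : {j ∈ R.toFinset | σ j = σ i} = {j | σ j = σ i}.toFinset := by
    ext j
    simp only [Set.mem_toFinset, Finset.mem_filter, Set.mem_ofPred_eq]
    exact ⟨And.right, fun hj => ⟨hR hj, hj⟩⟩
  rwa [hfiber, ← Set.ncard_eq_toFinset_card']

end FiberCount

namespace PhyloMP

theorem mk_mem_mutationEdges {V C : Type} {g : SimpleGraph V} {ω : V → C} {a b : V} :
    s(a, b) ∈ mutationEdges g ω ↔ g.Adj a b ∧ ω a ≠ ω b := by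
  constructor
  · rintro ⟨he, u, v, huv, hne⟩
    refine ⟨he, ?_⟩
    rcases Sym2.eq_iff.mp huv with ⟨rfl, rfl⟩ | ⟨rfl, rfl⟩
    exacts [hne, Ne.symm hne]
  · exact fun ⟨hab, hne⟩ => ⟨hab, a, b, rfl, hne⟩

theorem mutationEdges_recolor_ssubset {V C : Type} {g : SimpleGraph V} {ω : V → C} {A : Set V}
    [DecidablePred (· ∈ A)] (hA : ∀ a b, g.Adj a b → ω a = ω b → a ∈ A → b ∈ A)
    {a b : V} (hab : g.Adj a b) (ha : a ∈ A) (hb : b ∉ A) :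
    mutationEdges g (fun w => if w ∈ A then ω b else ω w) ⊂ mutationEdges g ω := by
  have hne : ω a ≠ ω b := fun h => hb (hA a b hab h ha)
  refine (Set.ssubset_iff_of_subset ?_).mpr
    ⟨s(a, b), mk_mem_mutationEdges.mpr ⟨hab, hne⟩, ?_⟩
  · intro e he
    induction e with | h x y =>
    obtain ⟨hxy, hne'⟩ := mk_mem_mutationEdges.mp he
    refine mk_mem_mutationEdges.mpr ⟨hxy, fun heq => ?_⟩
    by_cases hx : x ∈ A <;> by_cases hy : y ∈ A
    · simp [hx, hy] at hne'
    · exact hy (hA x y hxy heq hx)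
    · exact hx (hA y x hxy.symm heq.symm hy)
    · simp [hx, hy, heq] at hne'
  · simp [mk_mem_mutationEdges, ha, hb]

variable {X V C : Type} [Fintype V]

theorem forest_adj {T : XTree X V} {ω : V → C} {a b : V} :
    (forest T ω).Adj a b ↔ T.g.Adj a b ∧ ω a = ω b := by
  rw [forest, deleteEdges_adj, mk_mem_mutationEdges]
  tauto

theorem eq_of_reachable_forest {T : XTree X V} {ω : V → C} {a b : V}
    (h : (forest T ω).Reachable a b) : ω a = ω b := by
  obtain ⟨p⟩ := h
  induction p with
  | nil => rfl
  | cons hadj _ ih => exact (forest_adj.mp hadj).2.trans ih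

theorem XTree.nonempty (T : XTree X V) : Nonempty X := by
  classical
  by_contra hX
  have hdeg : ∀ v, T.g.degree v = 3 := fun v => by
    have hv : (T.g.neighborSet v).ncard ≠ 1 := fun h =>
      hX ⟨(T.leavesOnly v h).choose⟩
    rw [← card_neighborSet_eq_degree, ← Nat.card_eq_fintype_card, Nat.card_coe_set_eq]
    exact T.internalDeg v hv
  -- handshake: `3 |V| = 2 (|V| - 1)` is impossible
  have hsum := T.g.sum_degrees_eq_twice_card_edges
  have hedges := T.isTree.card_edgeFinset
  simp only [hdeg, Finset.sum_const, Finset.card_univ, smul_eq_mul] at hsum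
  omega

-- A forest component avoiding all leaves could be recoloured across its boundary,
-- saving a mutation.
theorem IsMPExtension.range_subset {T : XTree X V} {χ : X → C} {ω : V → C}
    (hω : IsMPExtension T χ ω) : Set.range ω ⊆ Set.range χ := by
  classical
  rintro _ ⟨v, rfl⟩
  by_contra hv
  set A := {w | (forest T ω).Reachable v w}
  have hleaf : ∀ x, T.leaf x ∉ A := fun x hx =>
    hv ⟨x, (hω.1 x).symm.trans (eq_of_reachable_forest hx).symm⟩
  have hA : ∀ a b, T.g.Adj a b → ω a = ω b → a ∈ A → b ∈ A := fun a b hab heq ha =>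
    ha.trans (forest_adj.mpr ⟨hab, heq⟩).reachable
  obtain ⟨x₀⟩ := T.nonempty
  obtain ⟨p⟩ := T.isTree.connected.preconnected v (T.leaf x₀)
  obtain ⟨d, -, hda, hdb⟩ := p.exists_boundary_dart A (Reachable.refl v) (hleaf x₀)
  have hext : IsExtension T χ (fun w => if w ∈ A then ω d.snd else ω w) := fun x => by
    simp [hleaf x, hω.1 x]
  have hlt := Set.ncard_lt_ncard (mutationEdges_recolor_ssubset hA d.adj hda hdb)
  have hle : score T χ ≤ _ := Nat.sInf_le ⟨_, hext, rfl⟩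
  rw [← hω.2] at hle
  omega

theorem card_connectedComponent_forest (T : XTree X V) (ω : V → C) :
    Nat.card (forest T ω).ConnectedComponent = (mutationEdges T.g ω).ncard + 1 :=
  T.isTree.card_connectedComponent_deleteEdges fun _ he => he.1

noncomputable def componentState (T : XTree X V) (ω : V → C) :
    (forest T ω).ConnectedComponent → C :=
  ConnectedComponent.lift ω fun _ _ p _ => eq_of_reachable_forest p.reachable

theorem carries_forest_iff {T : XTree X V} {ω : V → C} {c : (forest T ω).ConnectedComponent}
    {s : C} : carries (forest T ω) ω c s ↔ componentState T ω c = s := by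
  induction c using ConnectedComponent.ind with | h v =>
  constructor
  · rintro ⟨w, hw, rfl⟩
    exact eq_of_reachable_forest (ConnectedComponent.exact hw).symm
  · rintro rfl
    exact ⟨v, rfl, rfl⟩

theorem setOf_carries_stateMultiplicity_forest (T : XTree X V) (ω : V → C) (P : ℕ → Prop) :
    {c | ∃ s, carries (forest T ω) ω c s ∧ P (stateMultiplicity (forest T ω) ω s)} =
      {c | P {d | componentState T ω d = componentState T ω c}.ncard} := by
  ext c
  simp only [Set.mem_ofPred_eq, stateMultiplicity, carries_forest_iff, exists_eq_left']

theorem IsMPExtension.range_componentState {T : XTree X V} {χ : X → C} {ω : V → C}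
    (hω : IsMPExtension T χ ω) : Set.range (componentState T ω) = Set.range χ := by
  apply (Set.range_subset_iff.mpr fun c => ?_).antisymm
  · rintro _ ⟨x, rfl⟩
    exact ⟨(forest T ω).connectedComponentMk (T.leaf x), hω.1 x⟩
  · induction c using ConnectedComponent.ind with | h v =>
    exact hω.range_subset ⟨v, rfl⟩

end PhyloMP

open PhyloMP in
/-- With `h = ℓ(T,χ) - |χ| + 1` the homoplasy score, the number of unique
components of the induced forest lies between `|χ| - h` and `|χ|`, and the number of
repeating components lies between `h` and `2h`. -/
theorem stmt_6 {X V C : Type} [Fintype V] (T : XTree X V) (χ : X → C) (ω : V → C)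
    (hω : IsMPExtension T χ ω) :
    nStates χ - (score T χ + 1 - nStates χ)
        ≤ {c : (forest T ω).ConnectedComponent |
            ∃ s, carries (forest T ω) ω c s ∧ stateMultiplicity (forest T ω) ω s = 1}.ncard ∧
    {c : (forest T ω).ConnectedComponent |
        ∃ s, carries (forest T ω) ω c s ∧ stateMultiplicity (forest T ω) ω s = 1}.ncard
      ≤ nStates χ ∧
    score T χ + 1 - nStates χ
        ≤ {c : (forest T ω).ConnectedComponent |
            ∃ s, carries (forest T ω) ω c s ∧ 2 ≤ stateMultiplicity (forest T ω) ω s}.ncard ∧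
    {c : (forest T ω).ConnectedComponent |
        ∃ s, carries (forest T ω) ω c s ∧ 2 ≤ stateMultiplicity (forest T ω) ω s}.ncard
      ≤ 2 * (score T χ + 1 - nStates χ) := by
  rw [setOf_carries_stateMultiplicity_forest T ω (· = 1),
    setOf_carries_stateMultiplicity_forest T ω (2 ≤ ·)]
  have hcomponents := ncard_unique_add_ncard_repeating (componentState T ω)
  have hstates := ncard_range_eq_ncard_unique_add_ncard_image_repeating (componentState T ω)
  have hrepeating := two_mul_ncard_image_repeating_le (componentState T ω)
  rw [card_connectedComponent_forest, hω.2] at hcomponents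
  rw [hω.range_componentState] at hstates
  unfold nStates
  omega
end

section
/- Let χ be a character on X, T₂ an X-tree, A ≠ B two states of χ with taxon sets X_A = χ⁻¹(A) and X_B = χ⁻¹(B). Suppose T₂ has an edge e generating a split P|Q of X with X_A ⊆ P and X_B ⊆ Q. If χ' is obtained from χ by relabeling A := B, then ℓ(T₂,χ') ≥ ℓ(T₂,χ) − 1. -/
open SimpleGraph

/-!
Take a most parsimonious extension `ω'` of the relabeled character and recolor `B` back to `A`
on the side of the edge `uv` that contains `u`. This is an extension of `χ`, because the `A`-taxa
lie on that side and the `B`-taxa on the other. An edge inside one side keeps or loses its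
mutation under the recoloring, so `uv` is the only edge that can become a new mutation edge.
-/

namespace PhyloMP

variable {X V C : Type} [Fintype V]

theorem score_le_ncard_mutationEdges {T : XTree X V} {χ : X → C} {ω : V → C}
    (h : IsExtension T χ ω) : score T χ ≤ (mutationEdges T.g ω).ncard :=
  Nat.sInf_le ⟨ω, h, rfl⟩

/-- `hex` covers the junk case: without extensions of `χ'`, its score is `sInf ∅ = 0`. -/
theorem score_le_score_add (T : XTree X V) {χ χ' : X → C} (k : ℕ)
    (hex : ∀ ω, IsExtension T χ ω → ∃ ω', IsExtension T χ' ω')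
    (h : ∀ ω', IsExtension T χ' ω' →
      ∃ ω, IsExtension T χ ω ∧ (mutationEdges T.g ω).ncard ≤ (mutationEdges T.g ω').ncard + k) :
    score T χ ≤ score T χ' + k := by
  by_cases hne : ∃ ω', IsExtension T χ' ω'
  · obtain ⟨ω₀, hω₀⟩ := hne
    obtain ⟨ω', hω', hcard⟩ :=
      Nat.sInf_mem (s := {n | ∃ ω', IsExtension T χ' ω' ∧ (mutationEdges T.g ω').ncard = n})
        ⟨_, ω₀, hω₀, rfl⟩
    obtain ⟨ω, hω, hle⟩ := h ω' hω'
    calc score T χ ≤ (mutationEdges T.g ω).ncard := score_le_ncard_mutationEdges hω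
      _ ≤ (mutationEdges T.g ω').ncard + k := hle
      _ = score T χ' + k := by rw [hcard, score]
  · have hempty : {n | ∃ ω, IsExtension T χ ω ∧ (mutationEdges T.g ω).ncard = n} = ∅ :=
      Set.eq_empty_of_forall_notMem fun _ ⟨ω, hω, _⟩ => hne (hex ω hω)
    simp only [score, hempty, Nat.sInf_empty, zero_le]

theorem IsExtension.relabel [DecidableEq C] {T : XTree X V} {χ : X → C} {ω : V → C}
    (h : IsExtension T χ ω) (A B : C) : IsExtension T (relabel χ A B) (relabel ω A B) :=
  fun x => by simp only [PhyloMP.relabel, h x]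

theorem mutationEdges_piecewise_subset_union {V C : Type} (g : SimpleGraph V)
    (E : Set (Sym2 V)) (S : Set V) [DecidablePred (· ∈ S)]
    (hS : ∀ a b, (g.deleteEdges E).Adj a b → a ∈ S → b ∈ S) (f : C → C) (ω : V → C) :
    mutationEdges g (S.piecewise (f ∘ ω) ω) ⊆ mutationEdges g ω ∪ E := by
  rintro _ ⟨he, a, b, rfl, hab⟩
  by_cases heE : s(a, b) ∈ E
  · exact Or.inr heE
  refine Or.inl ⟨he, a, b, rfl, fun hωab => hab ?_⟩
  have hadj : (g.deleteEdges E).Adj a b := (deleteEdges_adj ..).mpr ⟨he, heE⟩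
  by_cases ha : a ∈ S
  · simp [ha, hS a b hadj ha, hωab]
  · have hb : b ∉ S := fun hb => ha (hS b a hadj.symm hb)
    simp [ha, hb, hωab]

theorem isExtension_piecewise_of_relabel [DecidableEq C] {T : XTree X V} {χ : X → C}
    {A B : C} {ω' : V → C} (h' : IsExtension T (relabel χ A B) ω') (S : Set V)
    [DecidablePred (· ∈ S)] (hA : ∀ x, χ x = A → T.leaf x ∈ S)
    (hB : ∀ x, χ x = B → T.leaf x ∉ S) :
    IsExtension T χ (S.piecewise ((fun c => if c = B then A else c) ∘ ω') ω') := by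
  intro x
  have hx := h' x
  simp only [PhyloMP.relabel] at hx
  by_cases hxS : T.leaf x ∈ S
  · by_cases hxA : χ x = A
    · simp [hxS, hx, hxA]
    · have hxB : χ x ≠ B := fun hxB => hB x hxB hxS
      simp [hxS, hx, hxA, hxB]
  · have hxA : χ x ≠ A := fun hxA => hxS (hA x hxA)
    simp [hxS, hx, hxA]

end PhyloMP

open PhyloMP in
theorem stmt_10_general {X V C : Type} [Fintype V] [DecidableEq C] (T₂ : XTree X V) (χ : X → C)
    (A B : C) (u v : V) (huv : T₂.g.Adj u v)
    (hA : ∀ x, χ x = A → (T₂.g.deleteEdges {s(u, v)}).Reachable (T₂.leaf x) u)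
    (hB : ∀ x, χ x = B → (T₂.g.deleteEdges {s(u, v)}).Reachable (T₂.leaf x) v) :
    score T₂ χ ≤ score T₂ (relabel χ A B) + 1 := by
  classical
  set G := T₂.g.deleteEdges {s(u, v)}
  have hsep : ¬ G.Reachable u v :=
    isBridge_iff.mp (isAcyclic_iff_forall_adj_isBridge.mp T₂.isTree.isAcyclic huv)
  let S : Set V := {w | G.Reachable w u}
  refine score_le_score_add T₂ 1 (fun ω hω => ⟨_, hω.relabel A B⟩) fun ω' hω' =>
    ⟨_, isExtension_piecewise_of_relabel hω' S hA
      (fun x hx hxu => hsep (hxu.symm.trans (hB x hx))), ?_⟩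
  calc _ ≤ (mutationEdges T₂.g ω' ∪ {s(u, v)}).ncard :=
        Set.ncard_le_ncard (mutationEdges_piecewise_subset_union _ _ S
          (fun _ _ hab ha => hab.symm.reachable.trans ha) _ ω') (Set.toFinite _)
    _ ≤ _ := Set.union_singleton ▸ Set.ncard_insert_le _ _

open PhyloMP in
/-- If an edge `{u,v}` of `T₂` generates a split `P|Q` with the `A`-taxa
in `P` and the `B`-taxa in `Q`, then relabeling `A := B` decreases the parsimony score
on `T₂` by at most one, i.e. `ℓ(T₂,χ') ≥ ℓ(T₂,χ) - 1`. -/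
theorem stmt_10 {X V C : Type} [Fintype V] [DecidableEq C] (T₂ : XTree X V) (χ : X → C)
    (A B : C) (hAB : A ≠ B) (u v : V) (huv : T₂.g.Adj u v)
    (hA : ∀ x, χ x = A → (T₂.g.deleteEdges {s(u, v)}).Reachable (T₂.leaf x) u)
    (hB : ∀ x, χ x = B → (T₂.g.deleteEdges {s(u, v)}).Reachable (T₂.leaf x) v) :
    score T₂ χ ≤ score T₂ (relabel χ A B) + 1 :=
  stmt_10_general T₂ χ A B u v huv hA hB
end

section
/- Let χ be a character on X and T an X-tree, and let A ≠ B be two states of χ. If ω is a most parsimonious extension of χ to T in which the set of vertices assigned A forms one connected subtree and the set of vertices assigned B forms one connected subtree, then T contains a mutation edge e of ω whose generated split P|Q satisfies χ⁻¹(A) ⊆ P and χ⁻¹(B) ⊆ Q. -/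
open SimpleGraph

/-! Follow a path from an `A`-vertex to a `B`-vertex and take the first edge `uv` on which it
leaves the `A`-subtree. Deleting `uv` disconnects neither the `A`-subtree (it misses `v`) nor the
`B`-subtree (it misses `u`), and the rest of the path, which never returns to `u`, still joins `v`
to the `B`-subtree. -/

namespace SimpleGraph

variable {V : Type} {g : SimpleGraph V}

theorem Walk.IsPath.exists_adj_mem_notMem_reachable_deleteEdges {S : Set V} {a b : V}
    {p : g.Walk a b} (hp : p.IsPath) (ha : a ∈ S) (hb : b ∉ S) :
    ∃ u v, g.Adj u v ∧ u ∈ S ∧ v ∉ S ∧ (g.deleteEdges {s(u, v)}).Reachable v b := by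
  induction p with
  | nil => exact absurd ha hb
  | @cons a c b hac q ih =>
    rw [Walk.cons_isPath_iff] at hp
    by_cases hc : c ∈ S
    · exact ih hp.1 hc hb
    · refine ⟨a, c, hac, ha, hc, ⟨q.toDeleteEdges _ ?_⟩⟩
      rintro e he rfl
      exact hp.2 (q.fst_mem_support_of_mem_edges he)

theorem Preconnected.reachable_deleteEdges_of_notMem {S : Set V}
    (hS : (g.induce S).Preconnected) {u v x y : V} (hu : u ∉ S) (hx : x ∈ S) (hy : y ∈ S) :
    (g.deleteEdges {s(u, v)}).Reachable x y :=
  let f : g.induce S →g g.deleteEdges {s(u, v)} :=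
    { toFun := Subtype.val
      map_rel' := fun {x y} hxy => by
        refine (deleteEdges_adj ..).2 ⟨hxy, ?_⟩
        intro h
        rcases Sym2.eq_iff.1 (Set.mem_singleton_iff.1 h) with ⟨rfl, -⟩ | ⟨-, rfl⟩
        exacts [hu x.2, hu y.2] }
  (hS ⟨x, hx⟩ ⟨y, hy⟩).map f

end SimpleGraph

open PhyloMP in
/-- If in a most parsimonious extension `ω` the vertices colored `A` form
one connected subtree and likewise for `B`, then some mutation edge of `ω` generates a
split separating all the `A`-taxa from all the `B`-taxa. -/
theorem stmt_11 {X V C : Type} [Fintype V] (T : XTree X V) (χ : X → C)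
    (A B : C) (hAB : A ≠ B) (ω : V → C) (hω : IsMPExtension T χ ω)
    (hAconn : (T.g.induce {v : V | ω v = A}).Connected)
    (hBconn : (T.g.induce {v : V | ω v = B}).Connected) :
    ∃ u v : V, T.g.Adj u v ∧ ω u ≠ ω v ∧
      (∀ x, χ x = A → (T.g.deleteEdges {s(u, v)}).Reachable (T.leaf x) u) ∧
      (∀ x, χ x = B → (T.g.deleteEdges {s(u, v)}).Reachable (T.leaf x) v) := by
  obtain ⟨⟨a, ha⟩⟩ := hAconn.nonempty
  obtain ⟨⟨b, hb⟩⟩ := hBconn.nonempty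
  obtain ⟨p, hp⟩ := (T.isTree.connected.preconnected a b).exists_isPath
  obtain ⟨u, v, huv, hu, hv, hvb⟩ :=
    hp.exists_adj_mem_notMem_reachable_deleteEdges (S := {v | ω v = A}) ha
      (fun hbA : ω b = A => hAB (hbA.symm.trans hb))
  have hu : ω u = A := hu
  have huB : ω u ≠ B := hu ▸ hAB
  refine ⟨u, v, huv, fun h => hv (h ▸ hu : ω v = A), fun x hx => ?_, fun x hx => ?_⟩
  · rw [Sym2.eq_swap]
    exact hAconn.preconnected.reachable_deleteEdges_of_notMem hv
      (show ω (T.leaf x) = A by rw [hω.1 x, hx]) hu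
  · exact (hBconn.preconnected.reachable_deleteEdges_of_notMem huB
      (show ω (T.leaf x) = B by rw [hω.1 x, hx]) hb).trans hvb.symm
end

section
/- Let T be a tree and ω, ω' two colorings of its vertices that agree outside a connected vertex subset W, where ω is constant on W. Then the set of mutation edges of ω with both endpoints outside W equals the set of mutation edges of ω' with both endpoints outside W, and ω has at most as many mutation edges with at least one endpoint in W as the number of edges leaving W. -/
open SimpleGraph

open PhyloMP in
/-- If two colorings of a tree agree outside a connected set `W` on which
the first is constant, then they have the same mutation edges with both endpoints outside
`W`, and the first coloring has at most as many mutation edges touching `W` as there are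
edges leaving `W`. -/
theorem stmt_15 {V C : Type} [Fintype V] (g : SimpleGraph V) (hT : g.IsTree)
    (W : Set V) (hWconn : (g.induce W).Connected)
    (ω ω' : V → C) (hagree : ∀ v ∉ W, ω v = ω' v)
    (hconst : ∀ u ∈ W, ∀ v ∈ W, ω u = ω v) :
    {e ∈ mutationEdges g ω | ∀ v ∈ e, v ∉ W}
        = {e ∈ mutationEdges g ω' | ∀ v ∈ e, v ∉ W} ∧
    {e ∈ mutationEdges g ω | ∃ v ∈ e, v ∈ W}.ncard
        ≤ {e ∈ g.edgeSet | ∃ u v : V, e = s(u, v) ∧ u ∈ W ∧ v ∉ W}.ncard := by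
  constructor
  · ext e
    simp only [Set.mem_setOf_eq, mutationEdges]
    constructor
    · rintro ⟨⟨he, u, v, rfl, hne⟩, hout⟩
      have hu : u ∉ W := hout u (by simp)
      have hv : v ∉ W := hout v (by simp)
      exact ⟨⟨he, u, v, rfl, by rw [← hagree u hu, ← hagree v hv]; exact hne⟩, hout⟩
    · rintro ⟨⟨he, u, v, rfl, hne⟩, hout⟩
      have hu : u ∉ W := hout u (by simp)
      have hv : v ∉ W := hout v (by simp)
      exact ⟨⟨he, u, v, rfl, by rw [hagree u hu, hagree v hv]; exact hne⟩, hout⟩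
  · apply Set.ncard_le_ncard
    · rintro e ⟨⟨he, u, v, rfl, hne⟩, w, hw, hwW⟩
      refine ⟨he, ?_⟩
      rcases Sym2.mem_iff.mp hw with h | h
      · subst h; exact ⟨w, v, rfl, hwW, fun hv => hne (hconst w hwW v hv)⟩
      · subst h; exact ⟨w, u, Sym2.eq_swap, hwW, fun hu => hne (hconst u hu w hwW)⟩
    · exact Set.toFinite _
end
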